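/- Let n be an odd perfect number, let q be a prime dividing n, and let β be the exponent of q in the prime factorization of n; suppose β is odd. Then σ(q^β) = 1 + q + ⋯ + q^β is congruent to 2 modulo 4, and the odd number σ(q^β)/2 divides n/q^β; in particular σ(q^β)/2 is coprime to q. -/

import Mathlib

open ArithmeticFunction Finset
open scoped ArithmeticFunction.sigma

/-!
Split `n = q^β * m` with `q ∤ m`. Multiplicativity of `σ` turns `σ(n) = 2n` into
`σ(q^β) σ(m) = 2 q^β m`. As `q` is odd, `σ(q^β)` is a sum of `β + 1` odd terms, hence even,
say `σ(q^β) = 2s`; then `s σ(m) = n` is odd, so `s` is odd and `σ(q^β) ≡ 2 mod 4`.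
Since `σ(q^β) ≡ 1 mod q`, `s` is coprime to `q^β`, and `s ∣ q^β m` gives `s ∣ m`.
-/

namespace ArithmeticFunction

theorem even_sigma_one_prime_pow {p k : ℕ} (hp : p.Prime) (hp_odd : Odd p) (hk : Odd k) :
    Even (σ 1 (p ^ k)) := by
  rw [sigma_one_apply_prime_pow hp, even_sum_iff_even_card_odd,
    filter_true_of_mem fun i _ ↦ hp_odd.pow, card_range]
  exact hk.add_one

theorem coprime_sigma_one_prime_pow {p : ℕ} (hp : p.Prime) (k : ℕ) :
    (σ 1 (p ^ k)).Coprime p := by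
  rw [Nat.coprime_comm, hp.coprime_iff_not_dvd, sigma_one_apply_prime_pow hp, sum_range_succ',
    pow_zero, Nat.dvd_add_right (dvd_sum fun i _ ↦ dvd_pow_self p (Nat.succ_ne_zero i))]
  exact hp.not_dvd_one

end ArithmeticFunction

theorem Nat.Perfect.sigma_one_mul_sigma_one {a b : ℕ} (h : (a * b).Perfect) (hab : a.Coprime b) :
    σ 1 a * σ 1 b = 2 * (a * b) := by
  rw [← isMultiplicative_sigma.map_mul_of_coprime hab, sigma_one_apply,
    (Nat.perfect_iff_sum_divisors_eq_two_mul h.2).mp h]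

/-- If `n` is an odd perfect number and `q` is a prime dividing `n` with odd
multiplicity `β`, then `σ(q^β) ≡ 2 [MOD 4]`, the odd number `σ(q^β)/2` divides
`n / q^β`, and `σ(q^β)/2` is coprime to `q`. -/
theorem stmt2 (n q : ℕ) (hn_odd : Odd n) (hn_perf : n.Perfect)
    (hq_prime : q.Prime) (hq_dvd : q ∣ n)
    (β : ℕ) (hβ : β = n.factorization q) (hβ_odd : Odd β) :
    ArithmeticFunction.sigma 1 (q ^ β) % 4 = 2 ∧
      Odd (ArithmeticFunction.sigma 1 (q ^ β) / 2) ∧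
      (ArithmeticFunction.sigma 1 (q ^ β) / 2) ∣ n / q ^ β ∧
      Nat.Coprime (ArithmeticFunction.sigma 1 (q ^ β) / 2) q := by
  obtain ⟨hn, hcop⟩ : q ^ β * (n / q ^ β) = n ∧ (q ^ β).Coprime (n / q ^ β) := by
    subst hβ
    exact ⟨Nat.ordProj_mul_ordCompl_eq_self n q,
      (Nat.coprime_ordCompl hq_prime hn_perf.2.ne').pow_left _⟩
  set m := n / q ^ β
  obtain ⟨s, hs⟩ := even_sigma_one_prime_pow hq_prime (hn_odd.of_dvd_nat hq_dvd) hβ_odd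
  have hs_half : σ 1 (q ^ β) / 2 = s := by omega
  have hs_mul : s * σ 1 m = q ^ β * m := by
    have := (hn ▸ hn_perf).sigma_one_mul_sigma_one hcop
    rw [hs] at this
    linarith
  have hs_odd : Odd s := (Nat.odd_mul.mp (hs_mul ▸ hn ▸ hn_odd)).1
  have hs_cop : s.Coprime q :=
    (coprime_sigma_one_prime_pow hq_prime β).coprime_dvd_left ⟨2, by rw [hs]; ring⟩
  rw [hs_half]
  refine ⟨?_, hs_odd, ?_, hs_cop⟩
  · obtain ⟨k, rfl⟩ := hs_odd
    omega
  · exact (hs_cop.pow_right β).dvd_of_dvd_mul_left ⟨σ 1 m, hs_mul.symm⟩
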